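/- Under class-balanced sampling and collapsed representations (all support representations equal a common vector z, which also equals the anchor representation), the soft nearest neighbours prediction p = π_d(z, S) equals the uniform distribution over the K represented classes; hence if the target p⁺ is not the uniform distribution, then p ≠ p⁺. -/

import Mathlib

/-!
When every support representation coincides with the anchor, all similarities `d z z_j` are the
same positive number, so the soft nearest neighbours weights are uniform and the prediction is the
average of the labels. For one-hot labels the `k`-th coordinate of that average is the proportion
of support samples of class `k`, which class balance makes `(n / K) / n = 1 / K`.
-/

open Finset

/-- The soft nearest neighbours prediction `π_d(z, S)` for the support set `S = (zs, y)`. -/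
noncomputable def softNearestNeighbours {E ι κ : Type*} [Fintype ι] (d : E → E → ℝ) (z : E)
    (zs : ι → E) (y : ι → κ → ℝ) : κ → ℝ :=
  fun k => ∑ j, (d z (zs j) / ∑ j', d z (zs j')) * y j k

section

variable {ι : Type*} [Fintype ι]

theorem sum_div_sum_mul_eq_average {w : ι → ℝ} {c : ℝ} (hc : c ≠ 0) (hw : ∀ j, w j = c)
    (x : ι → ℝ) : ∑ j, (w j / ∑ j', w j') * x j = (∑ j, x j) / Fintype.card ι := by
  simp only [hw, sum_const, card_univ, nsmul_eq_mul]
  rcases (Fintype.card ι).eq_zero_or_pos with hι | hι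
  · simp [Fintype.card_eq_zero_iff.mp hι]
  · rw [sum_div]
    refine sum_congr rfl fun j _ => ?_
    field_simp

theorem softNearestNeighbours_of_collapsed {E κ : Type*} {d : E → E → ℝ} {z : E} (hd : d z z ≠ 0)
    {zs : ι → E} (hz : ∀ j, zs j = z) (y : ι → κ → ℝ) :
    softNearestNeighbours d z zs y = fun k => (∑ j, y j k) / Fintype.card ι := by
  funext k
  exact sum_div_sum_mul_eq_average hd (fun j => by rw [hz j]) _

theorem sum_apply_eq_card_filter_of_oneHot {κ : Type*} [Fintype κ] [DecidableEq κ]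
    {y : ι → κ → ℝ} (hy : ∀ j, ∃ c, y j = Pi.single c 1) (k : κ) :
    ∑ j, y j k = #{j | y j = Pi.single k 1} := by
  rw [← sum_boole]
  refine sum_congr rfl fun j _ => ?_
  obtain ⟨c, hc⟩ := hy j
  rcases eq_or_ne c k with rfl | hck
  · simp [hc]
  · have hne : y j ≠ Pi.single k 1 := fun h => by
      simpa [hck] using congrFun (hc.symm.trans h) k
    rw [if_neg hne, hc, Pi.single_eq_of_ne (Ne.symm hck)]

end

theorem softNearestNeighbours_of_collapsed_of_balanced {E : Type*} {n K : ℕ} (hn : 0 < n)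
    (hdvd : K ∣ n) {d : E → E → ℝ} {z : E} (hd : d z z ≠ 0) {zs : Fin n → E}
    (hz : ∀ j, zs j = z) {y : Fin n → Fin K → ℝ} (hy : ∀ j, ∃ c, y j = Pi.single c 1)
    (hbal : ∀ c : Fin K, #{j | y j = Pi.single c 1} = n / K) :
    softNearestNeighbours d z zs y = fun _ => 1 / (K : ℝ) := by
  have hK : (K : ℝ) ≠ 0 := Nat.cast_ne_zero.mpr (Nat.pos_of_dvd_of_pos hdvd hn).ne'
  have hn' : (n : ℝ) ≠ 0 := Nat.cast_ne_zero.mpr hn.ne'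
  rw [softNearestNeighbours_of_collapsed hd hz]
  funext k
  rw [sum_apply_eq_card_filter_of_oneHot hy, hbal, Nat.cast_div hdvd hK, Fintype.card_fin]
  field_simp

theorem paws_stmt_2_general (D n K : ℕ) (hn : 0 < n) (hdvd : K ∣ n)
    (d : (Fin D → ℝ) → (Fin D → ℝ) → ℝ)
    (hd : ∀ a b, 0 < d a b)
    (z : Fin D → ℝ) (zs : Fin n → (Fin D → ℝ))
    (hz : ∀ j, zs j = z)
    (y : Fin n → Fin K → ℝ)
    (hy : ∀ j, ∃ c : Fin K, y j = Pi.single c 1)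
    (hbal : ∀ c : Fin K,
      (Finset.univ.filter (fun j : Fin n => y j = Pi.single c 1)).card = n / K)
    (p : Fin K → ℝ)
    (hp : p = fun k => ∑ j : Fin n, (d z (zs j) / ∑ j' : Fin n, d z (zs j')) * y j k)
    (pplus : Fin K → ℝ)
    (hpplus : pplus ≠ fun _ : Fin K => 1 / (K : ℝ)) :
    (p = fun _ : Fin K => 1 / (K : ℝ)) ∧ p ≠ pplus := by
  have hp_uniform : p = fun _ => 1 / (K : ℝ) :=
    hp.trans (softNearestNeighbours_of_collapsed_of_balanced hn hdvd (hd z z).ne' hz hy hbal)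
  exact ⟨hp_uniform, fun h => hpplus (h.symm.trans hp_uniform)⟩

/-- Proposition 1, non-collapsing representations: under
class-balanced sampling and collapsed representations, the soft nearest
neighbours prediction equals the uniform distribution over the `K` classes;
hence if the target `p⁺` is not uniform, then `p ≠ p⁺`. -/
theorem paws_stmt_2 (D n K : ℕ) (hK : 0 < K) (hn : 0 < n) (hdvd : K ∣ n)
    (d : (Fin D → ℝ) → (Fin D → ℝ) → ℝ)
    (hd : ∀ a b, 0 < d a b)
    (z : Fin D → ℝ) (zs : Fin n → (Fin D → ℝ))
    (hz : ∀ j, zs j = z)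
    (y : Fin n → Fin K → ℝ)
    (hy : ∀ j, ∃ c : Fin K, y j = Pi.single c 1)
    (hbal : ∀ c : Fin K,
      (Finset.univ.filter (fun j : Fin n => y j = Pi.single c 1)).card = n / K)
    (p : Fin K → ℝ)
    (hp : p = fun k => ∑ j : Fin n, (d z (zs j) / ∑ j' : Fin n, d z (zs j')) * y j k)
    (pplus : Fin K → ℝ)
    (hpplus : pplus ≠ fun _ : Fin K => 1 / (K : ℝ)) :
    (p = fun _ : Fin K => 1 / (K : ℝ)) ∧ p ≠ pplus :=
  paws_stmt_2_general D n K hn hdvd d hd z zs hz y hy hbal p hp pplus hpplus
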